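/- arXiv:1306.0554 — 6 statements merged into one kernel-verified Lean document; each statement's English description precedes it below -/
import Mathlib

section
/- POD error formula: for every d with 1 ≤ d ≤ l, (1/ℓ) Σ_{i=1}^ℓ ‖U_i − Σ_{j=1}^d ⟨U_i,ψ_j⟩ ψ_j‖² = Σ_{j=d+1}^{l} λ_j. -/
open RealInnerProductSpace

/-- **POD error formula.** Let `U 1, …, U ℓ` be snapshots in a real inner
product space `H`, not all zero, with correlation matrix
`K i j = (1/ℓ) ⟪U i, U j⟫`, positive eigenvalues `lam 1 ≥ ⋯ ≥ lam l > 0`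
(`l = rank K`, so `K = ∑ i, lam i • (v i ⊗ v i)` with orthonormal eigenvectors
`v i`), and POD basis `ψ i = (1/√(ℓ * lam i)) • ∑ j, (v i) j • U j`. Then for
every `d` with `1 ≤ d ≤ l`,
`(1/ℓ) ∑ i ‖U i − ∑_{j ≤ d} ⟪U i, ψ j⟫ • ψ j‖² = ∑_{j = d+1}^{l} lam j`. -/
theorem pod_error_formula
    {H : Type*} [NormedAddCommGroup H] [InnerProductSpace ℝ H]
    (ℓ l : ℕ) (hℓ : 0 < ℓ)
    (U : Fin ℓ → H) (hU : ∃ i, U i ≠ 0)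
    (K : Fin ℓ → Fin ℓ → ℝ)
    (hK : ∀ i j, K i j = (1 / (ℓ : ℝ)) * ⟪U i, U j⟫)
    (lam : Fin l → ℝ)
    (hpos : ∀ i, 0 < lam i)
    (hmono : ∀ i j : Fin l, i ≤ j → lam j ≤ lam i)
    (v : Fin l → Fin ℓ → ℝ)
    (hvorth : ∀ i i' : Fin l,
      (∑ j, v i j * v i' j) = if i = i' then (1 : ℝ) else 0)
    (hspec : ∀ j j' : Fin ℓ, K j j' = ∑ i, lam i * v i j * v i j')
    (ψ : Fin l → H)
    (hψ : ∀ i, ψ i = (Real.sqrt ((ℓ : ℝ) * lam i))⁻¹ • ∑ j, v i j • U j)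
    (d : ℕ) (hd1 : 1 ≤ d) (hdl : d ≤ l) :
    (1 / (ℓ : ℝ)) * ∑ i,
        ‖U i - ∑ j ∈ Finset.univ.filter (fun j : Fin l => (j : ℕ) < d),
            ⟪U i, ψ j⟫ • ψ j‖ ^ 2
      = ∑ j ∈ Finset.univ.filter (fun j : Fin l => d ≤ (j : ℕ)), lam j := by
  have hℓR : (0:ℝ) < ℓ := by exact_mod_cast hℓ
  have hs : ∀ m : Fin l, (0:ℝ) < (ℓ:ℝ) * lam m := fun m => mul_pos hℓR (hpos m)
  have hsq : ∀ m : Fin l, Real.sqrt ((ℓ:ℝ) * lam m) * Real.sqrt ((ℓ:ℝ) * lam m)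
      = (ℓ:ℝ) * lam m := fun m => Real.mul_self_sqrt (hs m).le
  have hsqpos : ∀ m : Fin l, (0:ℝ) < Real.sqrt ((ℓ:ℝ) * lam m) :=
    fun m => Real.sqrt_pos.mpr (hs m)
  have hinner : ∀ i k, ⟪U i, U k⟫ = (ℓ:ℝ) * K i k := by
    intro i k
    rw [hK i k]
    field_simp
  have hKv : ∀ (i : Fin ℓ) (m : Fin l), (∑ k, K i k * v m k) = lam m * v m i := by
    intro i m
    calc ∑ k, K i k * v m k = ∑ k, ∑ n, lam n * v n i * v n k * v m k := by
          simp_rw [hspec, Finset.sum_mul]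
      _ = ∑ n, (lam n * v n i) * ∑ k, v n k * v m k := by
          rw [Finset.sum_comm]
          refine Finset.sum_congr rfl fun n _ => ?_
          rw [Finset.mul_sum]; exact Finset.sum_congr rfl fun k _ => by ring
      _ = lam m * v m i := by
          simp_rw [hvorth]
          simp
  have hUψ : ∀ (i : Fin ℓ) (m : Fin l),
      ⟪U i, ψ m⟫ = Real.sqrt ((ℓ:ℝ) * lam m) * v m i := by
    intro i m
    rw [hψ m, real_inner_smul_right, inner_sum]
    simp_rw [real_inner_smul_right, hinner]
    have : ∑ k, v m k * ((ℓ:ℝ) * K i k) = (ℓ:ℝ) * (lam m * v m i) := by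
      rw [← hKv i m, Finset.mul_sum]
      exact Finset.sum_congr rfl fun k _ => by ring
    rw [this, show (ℓ:ℝ) * (lam m * v m i) = ((ℓ:ℝ) * lam m) * v m i from by ring,
      ← mul_assoc, inv_mul_eq_div, Real.div_sqrt]
  have hψψ : ∀ m m' : Fin l, ⟪ψ m, ψ m'⟫ = if m = m' then (1:ℝ) else 0 := by
    intro m m'
    rw [hψ m, real_inner_smul_left, sum_inner]
    simp_rw [real_inner_smul_left, hUψ]
    have : ∑ k, v m k * (Real.sqrt ((ℓ:ℝ) * lam m') * v m' k)
        = Real.sqrt ((ℓ:ℝ) * lam m') * ∑ k, v m k * v m' k := by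
      rw [Finset.mul_sum]; exact Finset.sum_congr rfl fun k _ => by ring
    rw [this, hvorth]
    by_cases h : m = m'
    · subst h
      rw [if_pos rfl, mul_one, inv_mul_cancel₀ (hsqpos m).ne']
    · rw [if_neg h, mul_zero, mul_zero]
  set F := Finset.univ.filter (fun j : Fin l => (j : ℕ) < d) with hF
  have hexp : ∀ i : Fin ℓ,
      ‖U i - ∑ j ∈ F, ⟪U i, ψ j⟫ • ψ j‖ ^ 2
        = ‖U i‖ ^ 2 - ∑ j ∈ F, ⟪U i, ψ j⟫ ^ 2 := by
    intro i
    have hiS : ⟪U i, ∑ j ∈ F, ⟪U i, ψ j⟫ • ψ j⟫ = ∑ j ∈ F, ⟪U i, ψ j⟫ ^ 2 := by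
      rw [inner_sum]
      exact Finset.sum_congr rfl fun j _ => by rw [real_inner_smul_right]; ring
    have hSS : ‖∑ j ∈ F, ⟪U i, ψ j⟫ • ψ j‖ ^ 2 = ∑ j ∈ F, ⟪U i, ψ j⟫ ^ 2 := by
      rw [← real_inner_self_eq_norm_sq, sum_inner]
      refine Finset.sum_congr rfl fun j hj => ?_
      rw [real_inner_smul_left, inner_sum]
      simp_rw [real_inner_smul_right, hψψ]
      simp_rw [mul_ite, mul_one, mul_zero]
      rw [Finset.sum_ite_eq]
      simp [hj, sq]
    rw [norm_sub_sq_real, hiS, hSS]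
    ring
  simp_rw [hexp]
  rw [Finset.sum_sub_distrib]
  have h1 : ∑ i, ‖U i‖ ^ 2 = (ℓ:ℝ) * ∑ m, lam m := by
    have : ∀ i : Fin ℓ, ‖U i‖ ^ 2 = (ℓ:ℝ) * K i i := by
      intro i; rw [← real_inner_self_eq_norm_sq, hinner]
    simp_rw [this, hspec]
    rw [← Finset.mul_sum, Finset.sum_comm]
    congr 1
    simp_rw [mul_assoc, ← Finset.mul_sum, hvorth]
    simp
  have h2 : ∑ i, ∑ j ∈ F, ⟪U i, ψ j⟫ ^ 2 = (ℓ:ℝ) * ∑ j ∈ F, lam j := by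
    rw [Finset.sum_comm, Finset.mul_sum]
    refine Finset.sum_congr rfl fun j _ => ?_
    simp_rw [hUψ]
    have : ∀ i : Fin ℓ, (Real.sqrt ((ℓ:ℝ) * lam j) * v j i) ^ 2
        = ((ℓ:ℝ) * lam j) * (v j i * v j i) := by
      intro i; rw [mul_pow, sq, hsq]; ring
    simp_rw [this, ← Finset.mul_sum, hvorth]
    simp
  rw [h1, h2]
  have h3 : ∑ j ∈ F, lam j + ∑ j ∈ Finset.univ.filter (fun j : Fin l => d ≤ (j:ℕ)), lam j
      = ∑ m, lam m := by
    rw [hF]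
    have := Finset.sum_filter_add_sum_filter_not (Finset.univ : Finset (Fin l))
      (fun j : Fin l => (j:ℕ) < d) lam
    simpa [not_lt] using this
  rw [← mul_sub, ← mul_assoc, one_div, inv_mul_cancel₀ hℓR.ne', one_mul]
  linarith [h3]
end

section
/- POD optimality: for every d with 1 ≤ d ≤ l and every orthonormal family φ₁,…,φ_d in H, one has (1/ℓ) Σ_{i=1}^ℓ ‖U_i − Σ_{j=1}^d ⟨U_i,φ_j⟩ φ_j‖² ≥ Σ_{j=d+1}^{l} λ_j; in other words, the POD basis ψ₁,…,ψ_d of rank d attains the minimum of the mean-square truncation error over all orthonormal families of size d. -/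
/-! The Gram factorisation `⟪U i, U j⟫ = ∑ k, ℓ λₖ vₖᵢ vₖⱼ` is a singular value decomposition:
the modes `ψ k` are orthonormal and `U j = ∑ k, √(ℓ λₖ) vₖⱼ ψ k`. For an orthonormal family `φ`
the mean-square truncation error is therefore `∑ k, λₖ (1 - bₖ)` with
`bₖ = ∑ m, ⟪ψ k, φ m⟫²`. Bessel's inequality, for `φ` and for `ψ`, gives `0 ≤ bₖ ≤ 1` and
`∑ k, bₖ ≤ d`, and for decreasing `λ` such weights satisfy `∑ k, λₖ bₖ ≤ ∑ k < d, λₖ`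
(compare each term with the threshold `λ_d`). -/

open RealInnerProductSpace Finset

theorem sum_sq_sum_mul_of_orthonormal_rows {κ ι : Type*} [Fintype κ] [Fintype ι]
    [DecidableEq κ] {v : κ → ι → ℝ}
    (hv : ∀ k k', ∑ j, v k j * v k' j = if k = k' then 1 else 0) (w : κ → ℝ) :
    ∑ j, (∑ k, w k * v k j) ^ 2 = ∑ k, w k ^ 2 := calc
  ∑ j, (∑ k, w k * v k j) ^ 2 = ∑ k, ∑ k', w k * w k' * ∑ j, v k j * v k' j := by
    simp only [sq, sum_mul_sum]
    rw [sum_comm]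
    refine sum_congr rfl fun k _ => ?_
    rw [sum_comm]
    refine sum_congr rfl fun k' _ => ?_
    rw [mul_sum]
    exact sum_congr rfl fun j _ => by ring
  _ = ∑ k, w k ^ 2 := by simp [hv, sq]

theorem sum_mul_le_sum_of_threshold {ι : Type*} [Fintype ι] [DecidableEq ι] {A : Finset ι}
    {lam b : ι → ℝ} {μ : ℝ} (hμ : 0 ≤ μ) (hA : ∀ k ∈ A, μ ≤ lam k)
    (hAc : ∀ k ∉ A, lam k ≤ μ) (hb0 : ∀ k, 0 ≤ b k) (hb1 : ∀ k, b k ≤ 1)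
    (hb : ∑ k, b k ≤ #A) : ∑ k, lam k * b k ≤ ∑ k ∈ A, lam k := by
  have hpoint : ∀ k, lam k * b k
      ≤ (if k ∈ A then lam k else 0) + μ * (b k - if k ∈ A then 1 else 0) := by
    intro k
    by_cases hk : k ∈ A
    · simp only [hk, if_true]
      nlinarith [hA k hk, hb1 k]
    · simp only [hk, if_false]
      nlinarith [hAc k hk, hb0 k]
  calc ∑ k, lam k * b k
      ≤ ∑ k, ((if k ∈ A then lam k else 0) + μ * (b k - if k ∈ A then 1 else 0)) :=
        sum_le_sum fun k _ => hpoint k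
    _ = ∑ k ∈ A, lam k + μ * (∑ k, b k - #A) := by
        rw [sum_add_distrib, ← mul_sum, sum_sub_distrib, sum_ite_mem, univ_inter, sum_boole]
        simp
    _ ≤ ∑ k ∈ A, lam k := by nlinarith

theorem sum_mul_le_sum_filter_lt_of_antitone {l d : ℕ} {lam b : Fin l → ℝ}
    (hlam : Antitone lam) (hlam0 : ∀ k, 0 ≤ lam k) (hb0 : ∀ k, 0 ≤ b k)
    (hb1 : ∀ k, b k ≤ 1) (hb : ∑ k, b k ≤ d) :
    ∑ k, lam k * b k ≤ ∑ k ∈ univ.filter (fun k : Fin l => (k : ℕ) < d), lam k := by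
  have hcard : ∑ k, b k ≤ #(univ.filter (fun k : Fin l => (k : ℕ) < d)) := by
    have hbl : ∑ k, b k ≤ l := by simpa using sum_le_sum fun k (_ : k ∈ univ) => hb1 k
    rw [Fin.card_filter_val_lt, Nat.cast_min]
    exact le_min hbl hb
  rcases lt_or_ge d l with hdl | hld
  · refine sum_mul_le_sum_of_threshold (hlam0 ⟨d, hdl⟩) (fun k hk => hlam ?_)
      (fun k hk => hlam ?_) hb0 hb1 hcard
    · simp only [mem_filter, mem_univ, true_and] at hk
      exact Fin.le_def.mpr hk.le
    · simp only [mem_filter, mem_univ, true_and, not_lt] at hk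
      exact Fin.le_def.mpr hk
  · refine sum_mul_le_sum_of_threshold le_rfl (fun k _ => hlam0 k) (fun k hk => ?_) hb0 hb1 hcard
    simp only [mem_filter, mem_univ, true_and] at hk
    exact absurd (k.isLt.trans_le hld) hk

section

variable {H : Type*} [NormedAddCommGroup H] [InnerProductSpace ℝ H]

theorem Orthonormal.norm_sub_sum_inner_smul_sq {ι : Type*} [Fintype ι] {e : ι → H}
    (he : Orthonormal ℝ e) (x : H) :
    ‖x - ∑ i, ⟪x, e i⟫ • e i‖ ^ 2 = ‖x‖ ^ 2 - ∑ i, ⟪x, e i⟫ ^ 2 := by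
  have hcross : ⟪x, ∑ i, ⟪x, e i⟫ • e i⟫ = ∑ i, ⟪x, e i⟫ ^ 2 := by
    simp only [inner_sum, real_inner_smul_right, sq]
  have hproj : ‖∑ i, ⟪x, e i⟫ • e i‖ ^ 2 = ∑ i, ⟪x, e i⟫ ^ 2 := by
    rw [← real_inner_self_eq_norm_sq, he.inner_sum]
    simp only [conj_trivial, sq]
  rw [norm_sub_sq_real, hcross, hproj]
  ring

theorem Orthonormal.sum_inner_sq_le {ι : Type*} [Fintype ι] {e : ι → H}
    (he : Orthonormal ℝ e) (x : H) : ∑ i, ⟪x, e i⟫ ^ 2 ≤ ‖x‖ ^ 2 :=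
  sub_nonneg.mp (he.norm_sub_sum_inner_smul_sq x ▸ sq_nonneg _)

section SnapshotModes

variable {ι κ : Type*} [Fintype ι] [Fintype κ] [DecidableEq κ]
  {U : ι → H} {σ : κ → ℝ} {v : κ → ι → ℝ} {ψ : κ → H}

theorem sum_norm_sq_of_gram
    (hv : ∀ k k', ∑ j, v k j * v k' j = if k = k' then 1 else 0)
    (hU : ∀ i j, ⟪U i, U j⟫ = ∑ k, σ k ^ 2 * v k i * v k j) :
    ∑ j, ‖U j‖ ^ 2 = ∑ k, σ k ^ 2 := calc
  ∑ j, ‖U j‖ ^ 2 = ∑ k, σ k ^ 2 * ∑ j, v k j * v k j := by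
    simp only [← real_inner_self_eq_norm_sq, hU, mul_sum]
    rw [sum_comm]
    exact sum_congr rfl fun k _ => sum_congr rfl fun j _ => by ring
  _ = ∑ k, σ k ^ 2 := by simp [hv]

theorem inner_mode_snapshot
    (hv : ∀ k k', ∑ j, v k j * v k' j = if k = k' then 1 else 0)
    (hU : ∀ i j, ⟪U i, U j⟫ = ∑ k, σ k ^ 2 * v k i * v k j)
    (hψ : ∀ k, ψ k = (σ k)⁻¹ • ∑ j, v k j • U j) (k : κ) (j : ι) :
    ⟪ψ k, U j⟫ = σ k * v k j := calc
  ⟪ψ k, U j⟫ = (σ k)⁻¹ * ∑ m, σ m ^ 2 * v m j * ∑ j', v k j' * v m j' := by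
    simp only [hψ, real_inner_smul_left, sum_inner, hU, mul_sum]
    rw [sum_comm]
    exact sum_congr rfl fun m _ => sum_congr rfl fun j' _ => by ring
  _ = σ k * v k j := by
    simp only [hv, mul_ite, mul_one, mul_zero, sum_ite_eq, mem_univ, if_true]
    field_simp

theorem orthonormal_modes
    (hv : ∀ k k', ∑ j, v k j * v k' j = if k = k' then 1 else 0)
    (hU : ∀ i j, ⟪U i, U j⟫ = ∑ k, σ k ^ 2 * v k i * v k j) (hσ : ∀ k, σ k ≠ 0)
    (hψ : ∀ k, ψ k = (σ k)⁻¹ • ∑ j, v k j • U j) : Orthonormal ℝ ψ := by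
  rw [orthonormal_iff_ite]
  intro k k'
  calc ⟪ψ k, ψ k'⟫ = (σ k')⁻¹ * σ k * ∑ j, v k j * v k' j := by
        conv_lhs => rw [hψ k']
        simp only [real_inner_smul_right, inner_sum, inner_mode_snapshot hv hU hψ, mul_sum]
        exact sum_congr rfl fun j _ => by ring
    _ = if k = k' then 1 else 0 := by
        rw [hv]
        split_ifs with h
        · subst h; simp [hσ]
        · simp

theorem snapshot_eq_sum_modes
    (hv : ∀ k k', ∑ j, v k j * v k' j = if k = k' then 1 else 0)
    (hU : ∀ i j, ⟪U i, U j⟫ = ∑ k, σ k ^ 2 * v k i * v k j) (hσ : ∀ k, σ k ≠ 0)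
    (hψ : ∀ k, ψ k = (σ k)⁻¹ • ∑ j, v k j • U j) (j : ι) :
    U j = ∑ k, (σ k * v k j) • ψ k := by
  have hcoeff : ∀ k, ⟪U j, ψ k⟫ = σ k * v k j := fun k => by
    rw [real_inner_comm, inner_mode_snapshot hv hU hψ]
  have hresidual := (orthonormal_modes hv hU hσ hψ).norm_sub_sum_inner_smul_sq (U j)
  simp only [hcoeff] at hresidual
  rw [← real_inner_self_eq_norm_sq (U j), hU] at hresidual
  have hzero : ‖U j - ∑ k, (σ k * v k j) • ψ k‖ ^ 2 = 0 := by
    rw [hresidual, ← sum_sub_distrib]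
    exact sum_eq_zero fun k _ => by ring
  simpa [sub_eq_zero] using hzero

theorem sum_inner_snapshot_sq
    (hv : ∀ k k', ∑ j, v k j * v k' j = if k = k' then 1 else 0)
    (hU : ∀ i j, ⟪U i, U j⟫ = ∑ k, σ k ^ 2 * v k i * v k j) (hσ : ∀ k, σ k ≠ 0)
    (hψ : ∀ k, ψ k = (σ k)⁻¹ • ∑ j, v k j • U j) (y : H) :
    ∑ j, ⟪U j, y⟫ ^ 2 = ∑ k, σ k ^ 2 * ⟪ψ k, y⟫ ^ 2 := by
  have hexpand : ∀ j, ⟪U j, y⟫ = ∑ k, σ k * ⟪ψ k, y⟫ * v k j := fun j => by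
    conv_lhs => rw [snapshot_eq_sum_modes hv hU hσ hψ j]
    simp only [sum_inner, real_inner_smul_left]
    exact sum_congr rfl fun k _ => by ring
  simp only [hexpand, sum_sq_sum_mul_of_orthonormal_rows hv, mul_pow]

theorem sum_norm_sub_sum_inner_smul_sq {ν : Type*} [Fintype ν] {φ : ν → H}
    (hφ : Orthonormal ℝ φ)
    (hv : ∀ k k', ∑ j, v k j * v k' j = if k = k' then 1 else 0)
    (hU : ∀ i j, ⟪U i, U j⟫ = ∑ k, σ k ^ 2 * v k i * v k j) (hσ : ∀ k, σ k ≠ 0)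
    (hψ : ∀ k, ψ k = (σ k)⁻¹ • ∑ j, v k j • U j) :
    ∑ j, ‖U j - ∑ m, ⟪U j, φ m⟫ • φ m‖ ^ 2
      = ∑ k, σ k ^ 2 * (1 - ∑ m, ⟪ψ k, φ m⟫ ^ 2) := by
  simp only [hφ.norm_sub_sum_inner_smul_sq, sum_sub_distrib, sum_norm_sq_of_gram hv hU,
    mul_sub, mul_one, mul_sum]
  rw [sum_comm (f := fun j m => ⟪U j, φ m⟫ ^ 2)]
  simp only [sum_inner_snapshot_sq hv hU hσ hψ]
  rw [sum_comm]

end SnapshotModes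

end

theorem pod_optimality_general
    {H : Type*} [NormedAddCommGroup H] [InnerProductSpace ℝ H]
    (ℓ l : ℕ) (hℓ : 0 < ℓ)
    (U : Fin ℓ → H)
    (K : Fin ℓ → Fin ℓ → ℝ)
    (hK : ∀ i j, K i j = (1 / (ℓ : ℝ)) * ⟪U i, U j⟫)
    (lam : Fin l → ℝ)
    (hpos : ∀ i, 0 < lam i)
    (hmono : ∀ i j : Fin l, i ≤ j → lam j ≤ lam i)
    (v : Fin l → Fin ℓ → ℝ)
    (hvorth : ∀ i i' : Fin l,
      (∑ j, v i j * v i' j) = if i = i' then (1 : ℝ) else 0)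
    (hspec : ∀ j j' : Fin ℓ, K j j' = ∑ i, lam i * v i j * v i j')
    (ψ : Fin l → H)
    (hψ : ∀ i, ψ i = (Real.sqrt ((ℓ : ℝ) * lam i))⁻¹ • ∑ j, v i j • U j)
    (d : ℕ)
    (φ : Fin d → H) (hφ : Orthonormal ℝ φ) :
    (∑ j ∈ Finset.univ.filter (fun j : Fin l => d ≤ (j : ℕ)), lam j)
      ≤ (1 / (ℓ : ℝ)) * ∑ i, ‖U i - ∑ j, ⟪U i, φ j⟫ • φ j‖ ^ 2 := by
  have hℓ0 : (0 : ℝ) < ℓ := by exact_mod_cast hℓ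
  set σ : Fin l → ℝ := fun k => Real.sqrt (ℓ * lam k)
  have hσsq : ∀ k, σ k ^ 2 = ℓ * lam k := fun k => Real.sq_sqrt (mul_pos hℓ0 (hpos k)).le
  have hσ : ∀ k, σ k ≠ 0 := fun k => (Real.sqrt_pos.mpr (mul_pos hℓ0 (hpos k))).ne'
  have hgram : ∀ i j, ⟪U i, U j⟫ = ∑ k, σ k ^ 2 * v k i * v k j := fun i j => calc
    ⟪U i, U j⟫ = ℓ * K i j := by rw [hK]; field_simp
    _ = ∑ k, σ k ^ 2 * v k i * v k j := by
      rw [hspec, mul_sum]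
      exact sum_congr rfl fun k _ => by rw [hσsq]; ring
  have hψo := orthonormal_modes hvorth hgram hσ hψ
  set b : Fin l → ℝ := fun k => ∑ m, ⟪ψ k, φ m⟫ ^ 2
  have hb1 : ∀ k, b k ≤ 1 := fun k => by simpa [hψo.1 k] using hφ.sum_inner_sq_le (ψ k)
  have hbsum : ∑ k, b k ≤ d := calc
    ∑ k, b k = ∑ m, ∑ k, ⟪φ m, ψ k⟫ ^ 2 := by rw [sum_comm]; simp only [real_inner_comm]
    _ ≤ ∑ m : Fin d, (1 : ℝ) :=
      sum_le_sum fun m _ => by simpa [hφ.1 m] using hψo.sum_inner_sq_le (φ m)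
    _ = d := by simp
  have hweights := sum_mul_le_sum_filter_lt_of_antitone hmono (fun k => (hpos k).le)
    (fun k => sum_nonneg fun m _ => sq_nonneg _) hb1 hbsum
  have hsplit := sum_filter_add_sum_filter_not univ (fun k : Fin l => d ≤ (k : ℕ)) lam
  simp only [not_le] at hsplit
  have herror : (1 / (ℓ : ℝ)) * ∑ k, σ k ^ 2 * (1 - b k) = ∑ k, lam k - ∑ k, lam k * b k := by
    simp only [hσsq, mul_sum, ← sum_sub_distrib]
    exact sum_congr rfl fun k _ => by field_simp
  rw [sum_norm_sub_sum_inner_smul_sq hφ hvorth hgram hσ hψ, herror]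
  linarith

/-- **POD optimality.** Let `U 1, …, U ℓ` be snapshots in a real inner product
space `H`, not all zero, with correlation matrix `K i j = (1/ℓ) ⟪U i, U j⟫`,
positive eigenvalues `lam 1 ≥ ⋯ ≥ lam l > 0` (`l = rank K`, so
`K = ∑ i, lam i • (v i ⊗ v i)` with orthonormal eigenvectors `v i`), and POD
basis `ψ i = (1/√(ℓ * lam i)) • ∑ j, (v i) j • U j`. Then for every `d` with
`1 ≤ d ≤ l` and every orthonormal family `φ 1, …, φ d` in `H`,
`(1/ℓ) ∑ i ‖U i − ∑_{j ≤ d} ⟪U i, φ j⟫ • φ j‖² ≥ ∑_{j = d+1}^{l} lam j`;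
i.e. the POD basis of rank `d` attains the minimal mean-square truncation
error over all orthonormal families of size `d`. -/
theorem pod_optimality
    {H : Type*} [NormedAddCommGroup H] [InnerProductSpace ℝ H]
    (ℓ l : ℕ) (hℓ : 0 < ℓ)
    (U : Fin ℓ → H) (hU : ∃ i, U i ≠ 0)
    (K : Fin ℓ → Fin ℓ → ℝ)
    (hK : ∀ i j, K i j = (1 / (ℓ : ℝ)) * ⟪U i, U j⟫)
    (lam : Fin l → ℝ)
    (hpos : ∀ i, 0 < lam i)
    (hmono : ∀ i j : Fin l, i ≤ j → lam j ≤ lam i)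
    (v : Fin l → Fin ℓ → ℝ)
    (hvorth : ∀ i i' : Fin l,
      (∑ j, v i j * v i' j) = if i = i' then (1 : ℝ) else 0)
    (hspec : ∀ j j' : Fin ℓ, K j j' = ∑ i, lam i * v i j * v i j')
    (ψ : Fin l → H)
    (hψ : ∀ i, ψ i = (Real.sqrt ((ℓ : ℝ) * lam i))⁻¹ • ∑ j, v i j • U j)
    (d : ℕ) (hd1 : 1 ≤ d) (hdl : d ≤ l)
    (φ : Fin d → H) (hφ : Orthonormal ℝ φ) :
    (∑ j ∈ Finset.univ.filter (fun j : Fin l => d ≤ (j : ℕ)), lam j)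
      ≤ (1 / (ℓ : ℝ)) * ∑ i, ‖U i - ∑ j, ⟪U i, φ j⟫ • φ j‖ ^ 2 :=
  pod_optimality_general ℓ l hℓ U K hK lam hpos hmono v hvorth hspec ψ hψ d φ hφ
end

section
/- Energy estimate for the backward Euler Galerkin scheme: let u solve the backward Euler scheme with data f : ℕ → H, and suppose ‖f(m)‖ ≤ F for all m ≥ 1. Then for every m ≥ 1, ‖u(m)‖ ≤ ((1 − e^{−γ k m})/γ)·F. -/
open RealInnerProductSpace

/-- **Energy estimate for the backward Euler Galerkin scheme.** Let `H` be a
real Hilbert space, `X` a subspace of `H`, `k > 0` a time step, and `B` a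
bilinear form on `H` with the coercivity bound `B v v ≥ γ‖v‖²` on `X`, `γ > 0`.
Suppose `u` solves the backward Euler scheme with data `f : ℕ → H`, i.e.
`u 0 = 0`, `u m ∈ X` for all `m`, and for every `m ≥ 1` and every `v ∈ X`,
`⟪u m, v⟫ + k * B (u m) v = k * ⟪f m, v⟫ + ⟪u (m−1), v⟫`. If `‖f m‖ ≤ F` for
all `m ≥ 1`, then for every `m ≥ 1`, `‖u m‖ ≤ ((1 − e^{−γkm})/γ) * F`. -/
theorem backwardEuler_energy_estimate
    {H : Type*} [NormedAddCommGroup H] [InnerProductSpace ℝ H] [CompleteSpace H]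
    (X : Submodule ℝ H) (k γ : ℝ) (hk : 0 < k) (hγ : 0 < γ)
    (B : H →ₗ[ℝ] H →ₗ[ℝ] ℝ)
    (hcoer : ∀ v ∈ X, γ * ‖v‖ ^ 2 ≤ B v v)
    (f u : ℕ → H)
    (hu0 : u 0 = 0) (huX : ∀ m, u m ∈ X)
    (hscheme : ∀ m, 1 ≤ m → ∀ v ∈ X,
      ⟪u m, v⟫ + k * B (u m) v = k * ⟪f m, v⟫ + ⟪u (m - 1), v⟫)
    (F : ℝ) (hF : ∀ m, 1 ≤ m → ‖f m‖ ≤ F) :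
    ∀ m, 1 ≤ m → ‖u m‖ ≤ ((1 - Real.exp (-(γ * k * m))) / γ) * F := by
  have hF0 : 0 ≤ F := le_trans (norm_nonneg _) (hF 1 le_rfl)
  have hden : (0:ℝ) < 1 + γ * k := by positivity
  -- one-step recursion
  have hrec : ∀ m, 1 ≤ m → (1 + γ * k) * ‖u m‖ ≤ k * F + ‖u (m - 1)‖ := by
    intro m hm
    have hs := hscheme m hm (u m) (huX m)
    have hc := hcoer (u m) (huX m)
    have hcs1 : ⟪f m, u m⟫ ≤ F * ‖u m‖ :=
      le_trans (real_inner_le_norm _ _)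
        (mul_le_mul_of_nonneg_right (hF m hm) (norm_nonneg _))
    have hcs2 : ⟪u (m-1), u m⟫ ≤ ‖u (m-1)‖ * ‖u m‖ := real_inner_le_norm _ _
    have hself : ⟪u m, u m⟫ = ‖u m‖ ^ 2 := real_inner_self_eq_norm_sq _
    have key : (1 + γ * k) * ‖u m‖ ^ 2 ≤ (k * F + ‖u (m-1)‖) * ‖u m‖ := by
      nlinarith [hs, hc, hcs1, hcs2, hk.le, norm_nonneg (u m)]
    rcases eq_or_lt_of_le (norm_nonneg (u m)) with h0 | h0
    · rw [← h0, mul_zero]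
      have : (0:ℝ) ≤ ‖u (m-1)‖ := norm_nonneg _
      nlinarith
    · nlinarith [key, h0]
  set r : ℝ := (1 + γ * k)⁻¹ with hr
  have hr1 : (1 + γ * k) * r = 1 := mul_inv_cancel₀ (ne_of_gt hden)
  -- discrete bound by induction
  have hbound : ∀ m, ‖u m‖ ≤ F * (1 - r ^ m) / γ := by
    intro m
    induction m with
    | zero => simp [hu0]
    | succ n ih =>
      have hrecn := hrec (n+1) (Nat.le_add_left 1 n)
      simp only [Nat.add_sub_cancel] at hrecn
      have h2 : (1 + γ * k) * ‖u (n+1)‖ ≤ k * F + F * (1 - r ^ n) / γ :=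
        le_trans hrecn (by linarith)
      have heq : k * F + F * (1 - r ^ n) / γ = (1 + γ * k) * (F * (1 - r ^ (n+1)) / γ) := by
        have : r ^ (n+1) = r * r ^ n := pow_succ' r n
        field_simp [this]
        linear_combination F * r ^ n * hr1
      rw [heq] at h2
      exact le_of_mul_le_mul_left h2 hden
  intro m hm
  have hexp : Real.exp (-(γ * k * m)) ≤ r ^ m := by
    have h1 : Real.exp (-(γ * k)) ≤ r := by
      rw [hr, Real.exp_neg]
      exact inv_anti₀ hden (by linarith [Real.add_one_le_exp (γ * k)])
    calc Real.exp (-(γ * k * m)) = Real.exp (-(γ * k)) ^ m := by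
          rw [← Real.exp_nat_mul]; ring_nf
      _ ≤ r ^ m := pow_le_pow_left₀ (Real.exp_nonneg _) h1 m
  calc ‖u m‖ ≤ F * (1 - r ^ m) / γ := hbound m
    _ ≤ ((1 - Real.exp (-(γ * k * m))) / γ) * F := by
        rw [div_mul_eq_mul_div, mul_comm]
        gcongr
end

section
/- Perturbation stability of the backward Euler Galerkin scheme: let u solve the backward Euler scheme with data f : ℕ → H and let w solve the same scheme with data g : ℕ → H, and suppose ‖f(m) − g(m)‖ ≤ F for all m ≥ 1. Then for every m ≥ 1, ‖u(m) − w(m)‖ ≤ ((1 − e^{−γ k m})/γ)·F. -/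
open RealInnerProductSpace

/-! The error `e = u - w` solves the scheme with data `f - g`. Testing its `m`-th step with
`v = e m` and using coercivity gives `(1 + kγ)‖e m‖ ≤ kF + ‖e (m-1)‖`, a linear recursion whose
solution from `e 0 = 0` is `(F/γ)(1 - (1 + kγ)⁻ᵐ)`; finally `(1 + kγ)⁻¹ ≥ e^{-kγ}`. -/

section BackwardEuler

variable {H : Type*} [NormedAddCommGroup H] [InnerProductSpace ℝ H]

def IsBackwardEulerSolution (X : Submodule ℝ H) (B : H →ₗ[ℝ] H →ₗ[ℝ] ℝ) (k : ℝ)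
    (f u : ℕ → H) : Prop :=
  ∀ m, 1 ≤ m → ∀ v ∈ X, ⟪u m, v⟫ + k * B (u m) v = k * ⟪f m, v⟫ + ⟪u (m - 1), v⟫

theorem IsBackwardEulerSolution.sub {X : Submodule ℝ H} {B : H →ₗ[ℝ] H →ₗ[ℝ] ℝ} {k : ℝ}
    {f g u w : ℕ → H} (hu : IsBackwardEulerSolution X B k f u)
    (hw : IsBackwardEulerSolution X B k g w) :
    IsBackwardEulerSolution X B k (f - g) (u - w) := by
  intro m hm v hv
  simp only [Pi.sub_apply, inner_sub_left, map_sub, LinearMap.sub_apply]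
  linarith [hu m hm v hv, hw m hm v hv]

theorem one_add_mul_norm_le_of_inner_self_add_mul {e d p : H} {k γ β : ℝ} (hk : 0 ≤ k)
    (hcoer : γ * ‖e‖ ^ 2 ≤ β) (h : ⟪e, e⟫ + k * β = k * ⟪d, e⟫ + ⟪p, e⟫) :
    (1 + k * γ) * ‖e‖ ≤ k * ‖d‖ + ‖p‖ := by
  have hsq : (1 + k * γ) * ‖e‖ ^ 2 ≤ (k * ‖d‖ + ‖p‖) * ‖e‖ :=
    calc (1 + k * γ) * ‖e‖ ^ 2 ≤ ⟪e, e⟫ + k * β := by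
          rw [real_inner_self_eq_norm_sq]; nlinarith
      _ = k * ⟪d, e⟫ + ⟪p, e⟫ := h
      _ ≤ k * (‖d‖ * ‖e‖) + ‖p‖ * ‖e‖ := by
          gcongr
          · exact real_inner_le_norm d e
          · exact real_inner_le_norm p e
      _ = (k * ‖d‖ + ‖p‖) * ‖e‖ := by ring
  rcases (norm_nonneg e).eq_or_lt with he | he
  · rw [← he, mul_zero]; positivity
  · rw [sq, ← mul_assoc] at hsq
    exact le_of_mul_le_mul_right hsq he

theorem IsBackwardEulerSolution.one_add_mul_norm_le {X : Submodule ℝ H}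
    {B : H →ₗ[ℝ] H →ₗ[ℝ] ℝ} {k γ : ℝ} {f u : ℕ → H} (hu : IsBackwardEulerSolution X B k f u)
    (huX : ∀ m, u m ∈ X) (hk : 0 ≤ k) (hcoer : ∀ v ∈ X, γ * ‖v‖ ^ 2 ≤ B v v) (n : ℕ) :
    (1 + k * γ) * ‖u (n + 1)‖ ≤ k * ‖f (n + 1)‖ + ‖u n‖ :=
  one_add_mul_norm_le_of_inner_self_add_mul hk (hcoer _ (huX _))
    (hu (n + 1) (Nat.le_add_left 1 n) (u (n + 1)) (huX _))

end BackwardEuler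

theorem le_div_mul_one_sub_inv_pow_of_one_add_mul_succ_le {a : ℕ → ℝ} {k γ F : ℝ}
    (hγ : γ ≠ 0) (hkγ : 0 < 1 + k * γ) (h0 : a 0 ≤ 0)
    (hstep : ∀ n, (1 + k * γ) * a (n + 1) ≤ k * F + a n) (n : ℕ) :
    a n ≤ F / γ * (1 - (1 + k * γ)⁻¹ ^ n) := by
  induction n with
  | zero => simpa using h0
  | succ n ih =>
    rw [← mul_le_mul_iff_of_pos_left hkγ]
    calc (1 + k * γ) * a (n + 1) ≤ k * F + a n := hstep n
      _ ≤ k * F + F / γ * (1 - (1 + k * γ)⁻¹ ^ n) := by gcongr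
      _ = (1 + k * γ) * (F / γ * (1 - (1 + k * γ)⁻¹ ^ (n + 1))) := by
          field_simp
          linear_combination (F * (1 + k * γ)⁻¹ ^ n) * mul_inv_cancel₀ hkγ.ne'

theorem Real.exp_neg_mul_le_inv_one_add_pow {x : ℝ} (hx : 0 < 1 + x) (n : ℕ) :
    Real.exp (-(x * n)) ≤ (1 + x)⁻¹ ^ n := by
  rw [neg_mul_eq_neg_mul, mul_comm, Real.exp_nat_mul, Real.exp_neg]
  gcongr
  linarith [Real.add_one_le_exp x]

theorem backwardEuler_perturbation_stability_general
    {H : Type*} [NormedAddCommGroup H] [InnerProductSpace ℝ H]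
    (X : Submodule ℝ H) (k γ : ℝ) (hk : 0 < k) (hγ : 0 < γ)
    (B : H →ₗ[ℝ] H →ₗ[ℝ] ℝ)
    (hcoer : ∀ v ∈ X, γ * ‖v‖ ^ 2 ≤ B v v)
    (f g u w : ℕ → H)
    (hu0 : u 0 = 0) (huX : ∀ m, u m ∈ X)
    (huscheme : ∀ m, 1 ≤ m → ∀ v ∈ X,
      ⟪u m, v⟫ + k * B (u m) v = k * ⟪f m, v⟫ + ⟪u (m - 1), v⟫)
    (hw0 : w 0 = 0) (hwX : ∀ m, w m ∈ X)
    (hwscheme : ∀ m, 1 ≤ m → ∀ v ∈ X,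
      ⟪w m, v⟫ + k * B (w m) v = k * ⟪g m, v⟫ + ⟪w (m - 1), v⟫)
    (F : ℝ) (hF : ∀ m, 1 ≤ m → ‖f m - g m‖ ≤ F) :
    ∀ m, 1 ≤ m → ‖u m - w m‖ ≤ ((1 - Real.exp (-(γ * k * m))) / γ) * F := by
  intro m _
  have hkγ : 0 < 1 + k * γ := by positivity
  have hF0 : 0 ≤ F := (norm_nonneg _).trans (hF 1 le_rfl)
  have hstep (n : ℕ) : (1 + k * γ) * ‖u (n + 1) - w (n + 1)‖ ≤ k * F + ‖u n - w n‖ :=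
    calc _ ≤ k * ‖f (n + 1) - g (n + 1)‖ + ‖u n - w n‖ :=
          (IsBackwardEulerSolution.sub huscheme hwscheme).one_add_mul_norm_le
            (fun m ↦ X.sub_mem (huX m) (hwX m)) hk.le hcoer n
      _ ≤ k * F + ‖u n - w n‖ := by gcongr; exact hF (n + 1) n.succ_pos
  calc ‖u m - w m‖ ≤ F / γ * (1 - (1 + k * γ)⁻¹ ^ m) :=
        le_div_mul_one_sub_inv_pow_of_one_add_mul_succ_le
          (a := fun n ↦ ‖u n - w n‖) hγ.ne' hkγ (by simp [hu0, hw0]) hstep m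
    _ ≤ F / γ * (1 - Real.exp (-(γ * k * m))) := by
        rw [mul_comm γ k]
        gcongr
        exact Real.exp_neg_mul_le_inv_one_add_pow hkγ m
    _ = ((1 - Real.exp (-(γ * k * m))) / γ) * F := by ring

/-- **Perturbation stability of the backward Euler Galerkin scheme.** Let `H`
be a real Hilbert space, `X` a subspace of `H`, `k > 0` a time step and `B` a
bilinear form on `H` with coercivity bound `B v v ≥ γ‖v‖²` on `X`, `γ > 0`.
Let `u` solve the backward Euler scheme with data `f : ℕ → H` and `w` solve
the same scheme with data `g : ℕ → H`. If `‖f m − g m‖ ≤ F` for all `m ≥ 1`,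
then for every `m ≥ 1`, `‖u m − w m‖ ≤ ((1 − e^{−γkm})/γ) * F`. -/
theorem backwardEuler_perturbation_stability
    {H : Type*} [NormedAddCommGroup H] [InnerProductSpace ℝ H] [CompleteSpace H]
    (X : Submodule ℝ H) (k γ : ℝ) (hk : 0 < k) (hγ : 0 < γ)
    (B : H →ₗ[ℝ] H →ₗ[ℝ] ℝ)
    (hcoer : ∀ v ∈ X, γ * ‖v‖ ^ 2 ≤ B v v)
    (f g u w : ℕ → H)
    (hu0 : u 0 = 0) (huX : ∀ m, u m ∈ X)
    (huscheme : ∀ m, 1 ≤ m → ∀ v ∈ X,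
      ⟪u m, v⟫ + k * B (u m) v = k * ⟪f m, v⟫ + ⟪u (m - 1), v⟫)
    (hw0 : w 0 = 0) (hwX : ∀ m, w m ∈ X)
    (hwscheme : ∀ m, 1 ≤ m → ∀ v ∈ X,
      ⟪w m, v⟫ + k * B (w m) v = k * ⟪g m, v⟫ + ⟪w (m - 1), v⟫)
    (F : ℝ) (hF : ∀ m, 1 ≤ m → ‖f m - g m‖ ≤ F) :
    ∀ m, 1 ≤ m → ‖u m - w m‖ ≤ ((1 - Real.exp (-(γ * k * m))) / γ) * F :=
  backwardEuler_perturbation_stability_general X k γ hk hγ B hcoer f g u w hu0 huX huscheme hw0 hwX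
    hwscheme F hF
end

section
/- Continuous perturbation estimate: let H be a real Hilbert space, γ > 0, F ≥ 0, T > 0, and let z : ℝ → H be differentiable on [0,T] with z(0) = 0. Suppose that for all t ∈ [0,T], ⟨z′(t), z(t)⟩ ≤ F·‖z(t)‖ − γ·‖z(t)‖². Then for all t ∈ [0,T], ‖z(t)‖ ≤ (F/γ)·(1 − e^{−γ t}). -/
open RealInnerProductSpace

/-! Compare `‖z‖` with the barrier `b = (F/γ)(1 - e^{-γt}) + δ`, which solves `b' = F - γ (b - δ)`,
`b 0 = δ`. At a contact point `‖z‖ = b` the hypothesis gives `⟪z', z⟫ ≤ b (F - γ b) < b b'`, so `‖z‖`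
can never cross `b`. This fencing argument is run on `‖z‖²`, which, unlike `‖z‖`, is differentiable
where `z` vanishes. Letting `δ → 0` gives the estimate. -/

open Set

theorem norm_le_of_inner_deriv_right_lt_deriv_boundary
    {H : Type*} [NormedAddCommGroup H] [InnerProductSpace ℝ H]
    {z z' : ℝ → H} {b b' : ℝ → ℝ} {a c : ℝ}
    (hz : ContinuousOn z (Icc a c)) (hz' : ∀ t ∈ Ico a c, HasDerivWithinAt z (z' t) (Ici t) t)
    (hb : ∀ t, HasDerivAt b (b' t) t) (hb_nonneg : ∀ t ∈ Icc a c, 0 ≤ b t)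
    (ha : ‖z a‖ ≤ b a) (bound : ∀ t ∈ Ico a c, ‖z t‖ = b t → ⟪z' t, z t⟫ < b t * b' t) :
    ∀ ⦃t⦄, t ∈ Icc a c → ‖z t‖ ≤ b t := by
  have hsq : ∀ ⦃t⦄, t ∈ Icc a c → ‖z t‖ ^ 2 ≤ b t ^ 2 := by
    refine image_le_of_deriv_right_lt_deriv_boundary (hz.norm.pow 2)
      (fun t ht => (hz' t ht).norm_sq) (pow_le_pow_left₀ (norm_nonneg _) ha 2)
      (fun t => (hb t).pow 2) fun t ht hcontact => ?_
    have hbt := hb_nonneg t (Ico_subset_Icc_self ht)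
    simp only [Pi.pow_apply] at hcontact
    rw [pow_left_inj₀ (norm_nonneg _) hbt two_ne_zero] at hcontact
    have := bound t ht hcontact
    rw [real_inner_comm]
    norm_num
    linarith
  exact fun t ht => (pow_le_pow_iff_left₀ (norm_nonneg _) (hb_nonneg t ht) two_ne_zero).1 (hsq ht)

noncomputable def perturbationBound (γ F t : ℝ) : ℝ := F / γ * (1 - Real.exp (-(γ * t)))

theorem hasDerivAt_perturbationBound {γ : ℝ} (hγ : γ ≠ 0) (F t : ℝ) :
    HasDerivAt (perturbationBound γ F) (F - γ * perturbationBound γ F t) t := by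
  have hexp : HasDerivAt (fun s => Real.exp (-(γ * s))) (Real.exp (-(γ * t)) * -γ) t := by
    simpa using ((hasDerivAt_id t).const_mul γ).neg.exp
  refine ((hexp.const_sub 1).const_mul (F / γ)).congr_deriv ?_
  unfold perturbationBound
  field_simp
  ring

theorem perturbationBound_nonneg {γ F t : ℝ} (hγ : 0 < γ) (hF : 0 ≤ F) (ht : 0 ≤ t) :
    0 ≤ perturbationBound γ F t := by
  have : Real.exp (-(γ * t)) ≤ 1 := Real.exp_le_one_iff.2 (by nlinarith)
  exact mul_nonneg (div_nonneg hF hγ.le) (by linarith)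

theorem continuous_perturbation_estimate_general
    {H : Type*} [NormedAddCommGroup H] [InnerProductSpace ℝ H]
    (γ F T : ℝ) (hγ : 0 < γ) (hF : 0 ≤ F)
    (z z' : ℝ → H)
    (hderiv : ∀ t ∈ Set.Icc (0 : ℝ) T, HasDerivAt z (z' t) t)
    (hz0 : z 0 = 0)
    (hineq : ∀ t ∈ Set.Icc (0 : ℝ) T,
      ⟪z' t, z t⟫ ≤ F * ‖z t‖ - γ * ‖z t‖ ^ 2) :
    ∀ t ∈ Set.Icc (0 : ℝ) T, ‖z t‖ ≤ (F / γ) * (1 - Real.exp (-(γ * t))) := by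
  intro t ht
  refine le_of_forall_pos_le_add fun δ hδ => ?_
  set p := perturbationBound γ F
  have hp_nonneg : ∀ s ∈ Icc 0 T, 0 ≤ p s := fun s hs => perturbationBound_nonneg hγ hF hs.1
  refine norm_le_of_inner_deriv_right_lt_deriv_boundary (b := fun s => p s + δ)
    (HasDerivAt.continuousOn hderiv)
    (fun s hs => (hderiv s (Ico_subset_Icc_self hs)).hasDerivWithinAt)
    (fun s => (hasDerivAt_perturbationBound hγ.ne' F s).add_const δ)
    (fun s hs => by linarith [hp_nonneg s hs])
    (by simp [p, perturbationBound, hz0, hδ.le]) (fun s hs hcontact => ?_) ht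
  have hs := Ico_subset_Icc_self hs
  have hpos : 0 < p s + δ := by linarith [hp_nonneg s hs]
  calc ⟪z' s, z s⟫ ≤ (p s + δ) * (F - γ * (p s + δ)) := by
        rw [← hcontact]; linear_combination hineq s hs
    _ < (p s + δ) * (F - γ * p s) := mul_lt_mul_of_pos_left (by linarith [mul_pos hγ hδ]) hpos

/-- **Continuous perturbation estimate.** Let `H` be a real Hilbert space,
`γ > 0`, `F ≥ 0`, `T > 0`, and let `z : ℝ → H` be differentiable on `[0,T]`
with `z 0 = 0`. Suppose that for all `t ∈ [0,T]`,
`⟪z' t, z t⟫ ≤ F * ‖z t‖ − γ * ‖z t‖²`. Then for all `t ∈ [0,T]`,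
`‖z t‖ ≤ (F/γ) * (1 − e^{−γt})`. -/
theorem continuous_perturbation_estimate
    {H : Type*} [NormedAddCommGroup H] [InnerProductSpace ℝ H] [CompleteSpace H]
    (γ F T : ℝ) (hγ : 0 < γ) (hF : 0 ≤ F) (hT : 0 < T)
    (z z' : ℝ → H)
    (hderiv : ∀ t ∈ Set.Icc (0 : ℝ) T, HasDerivAt z (z' t) t)
    (hz0 : z 0 = 0)
    (hineq : ∀ t ∈ Set.Icc (0 : ℝ) T,
      ⟪z' t, z t⟫ ≤ F * ‖z t‖ - γ * ‖z t‖ ^ 2) :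
    ∀ t ∈ Set.Icc (0 : ℝ) T, ‖z t‖ ≤ (F / γ) * (1 - Real.exp (-(γ * t))) :=
  continuous_perturbation_estimate_general γ F T hγ hF z z' hderiv hz0 hineq
end

section
/- Analyticity lemma (derivative bounds for the parametrized scheme): suppose that for each y ∈ ℝ, u(y) solves the backward Euler scheme with data f(y) : ℕ → H; suppose that for each m ≤ N the maps y ↦ f(y)(m) and y ↦ u(y)(m) are infinitely differentiable from ℝ to H, and that there is γ_* ≥ 0 such that for all y, all j ≥ 0 and all 1 ≤ m ≤ N, the j-th derivative satisfies ‖∂_y^j f(y)(m)‖ ≤ γ_*^j · j! · (1 + max_{1≤i≤N} ‖f(y)(i)‖). Then for all y, all j ≥ 0 and all 1 ≤ m ≤ N, ‖∂_y^j u(y)(m)‖ ≤ ((1 − e^{−γ k m})/γ) · (1 + max_{1≤i≤N} ‖f(y)(i)‖) · γ_*^j · j!. -/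
open Topology Filter intervalIntegral
open RealInnerProductSpace

section DqAux
variable {E : Type*} [NormedAddCommGroup E] [NormedSpace ℝ E]

/-- Iterated forward difference quotient. -/
noncomputable def Dq : ℕ → (ℝ → E) → ℝ → ℝ → E
  | 0, G, _, y => G y
  | (j+1), G, h, y => h⁻¹ • (Dq j G h (y + h) - Dq j G h y)

lemma Dq_congr {j : ℕ} {G G' : ℝ → E} (hGG : ∀ z, G z = G' z) (h y : ℝ) :
    Dq j G h y = Dq j G' h y := by
  induction j generalizing y with
  | zero => exact hGG y
  | succ j ih => simp only [Dq, ih]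

lemma Dq_shift {j : ℕ} (G : ℝ → E) (t h y : ℝ) :
    Dq j (fun z => G (z + t)) h y = Dq j G h (y + t) := by
  induction j generalizing y with
  | zero => rfl
  | succ j ih =>
    simp only [Dq, ih]
    rw [add_right_comm]

lemma Dq_continuous {j : ℕ} {G : ℝ → E} (hG : Continuous G) (h : ℝ) :
    Continuous (fun y => Dq j G h y) := by
  induction j with
  | zero => exact hG
  | succ j ih =>
    simp only [Dq]
    exact ((ih.comp (continuous_id.add continuous_const)).sub ih).const_smul _

lemma Dq_smul {j : ℕ} (G : ℝ → E) (c h y : ℝ) :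
    Dq j (fun z => c • G z) h y = c • Dq j G h y := by
  induction j generalizing y with
  | zero => rfl
  | succ j ih =>
    simp only [Dq, ih, smul_sub, smul_comm c h⁻¹]

lemma Dq_succ_eq {j : ℕ} (G : ℝ → E) (h y : ℝ) :
    Dq (j+1) G h y = Dq j (fun z => h⁻¹ • (G (z + h) - G z)) h y := by
  induction j generalizing y with
  | zero => rfl
  | succ j ih =>
    show h⁻¹ • (Dq (j+1) G h (y + h) - Dq (j+1) G h y) = _
    rw [ih, ih]
    rfl

lemma Dq_integral {j : ℕ} {ψ : ℝ → E} (hψ : Continuous ψ) (h y : ℝ) :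
    Dq j (fun z => ∫ t in (0:ℝ)..h, ψ (z + t)) h y
      = ∫ t in (0:ℝ)..h, Dq j ψ h (y + t) := by
  induction j generalizing y with
  | zero => rfl
  | succ j ih =>
    have hc : ∀ w : ℝ, Continuous fun t : ℝ => Dq j ψ h (w + t) :=
      fun w => (Dq_continuous hψ h).comp (continuous_const.add continuous_id)
    show h⁻¹ • (Dq j _ h (y + h) - Dq j _ h y) = _
    rw [ih, ih, ← integral_sub ((hc (y+h)).intervalIntegrable _ _)
        ((hc y).intervalIntegrable _ _), ← integral_smul]
    refine intervalIntegral.integral_congr fun t _ => ?_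
    show h⁻¹ • (Dq j ψ h (y + h + t) - Dq j ψ h (y + t)) = Dq (j+1) ψ h (y + t)
    simp only [Dq]
    rw [add_right_comm]

lemma Dq_eq_integral {j : ℕ} {G : ℝ → E} [CompleteSpace E]
    (hG : ContDiff ℝ (⊤:ℕ∞) G) (h y : ℝ) :
    Dq (j+1) G h y = h⁻¹ • ∫ t in (0:ℝ)..h, Dq j (deriv G) h (y + t) := by
  have hd : Continuous (deriv G) := by
    simpa using (hG.iterate_deriv 1).continuous
  have key : ∀ z : ℝ, G (z + h) - G z = ∫ t in (0:ℝ)..h, deriv G (z + t) := by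
    intro z
    rw [integral_comp_add_left (deriv G) z, add_zero]
    rw [integral_deriv_eq_sub (fun x _ => (hG.differentiable (by simp)).differentiableAt)
        (hd.intervalIntegrable _ _)]
  rw [Dq_succ_eq, ← Dq_integral hd h y, ← Dq_smul]
  exact Dq_congr (fun z => by rw [key z]) h y

lemma contDiff_deriv {G : ℝ → E} (hG : ContDiff ℝ (⊤:ℕ∞) G) :
    ContDiff ℝ (⊤:ℕ∞) (deriv G) := by
  simpa using hG.iterate_deriv 1

lemma Dq_sub_iteratedDeriv_le {j : ℕ} {G : ℝ → E} [CompleteSpace E]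
    (hG : ContDiff ℝ (⊤:ℕ∞) G) {y h C : ℝ} (hh : 0 < h)
    (hC : ∀ z ∈ Set.Icc y (y + j * h), ‖iteratedDeriv j G z - iteratedDeriv j G y‖ ≤ C) :
    ‖Dq j G h y - iteratedDeriv j G y‖ ≤ 3 ^ j * C := by
  induction j generalizing G y C with
  | zero =>
    have h0 : (0:ℝ) ≤ C := le_trans (norm_nonneg _) (hC y (by simp [hh.le]))
    simpa [Dq, iteratedDeriv_zero] using h0
  | succ j ih =>
    have hjh : (0:ℝ) ≤ ((j+1:ℕ):ℝ) * h := by positivity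
    have hC0 : 0 ≤ C := le_trans (norm_nonneg _) (hC y ⟨le_rfl, by linarith⟩)
    set ψ := deriv G with hψdef
    have hd : ContDiff ℝ (⊤:ℕ∞) ψ := contDiff_deriv hG
    have hCψ : ∀ z ∈ Set.Icc y (y + ((j+1:ℕ):ℝ) * h),
        ‖iteratedDeriv j ψ z - iteratedDeriv j ψ y‖ ≤ C := by
      intro z hz
      have := hC z hz
      rwa [iteratedDeriv_succ'] at this
    set c := iteratedDeriv j ψ y with hcdef
    have hgoal_c : iteratedDeriv (j+1) G y = c := by rw [iteratedDeriv_succ']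
    have hint : Continuous fun t : ℝ => Dq j ψ h (y + t) :=
      (Dq_continuous hd.continuous h).comp (continuous_const.add continuous_id)
    have e1 : (∫ t in (0:ℝ)..h, Dq j ψ h (y+t)) - h • c
        = ∫ t in (0:ℝ)..h, (Dq j ψ h (y+t) - c) := by
      rw [integral_sub (hint.intervalIntegrable _ _) (intervalIntegrable_const),
        integral_const]
      simp
    have bound : ∀ t ∈ Set.uIoc (0:ℝ) h, ‖Dq j ψ h (y+t) - c‖ ≤ 3^j * (2*C) + C := by
      intro t ht
      rw [Set.uIoc_of_le hh.le] at ht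
      obtain ⟨ht0, hth⟩ := ht
      have h2 : ‖iteratedDeriv j ψ (y+t) - c‖ ≤ C := by
        refine hCψ (y+t) ⟨by linarith, ?_⟩
        push_cast
        nlinarith [Nat.cast_nonneg (α := ℝ) j]
      have h1 : ‖Dq j ψ h (y+t) - iteratedDeriv j ψ (y+t)‖ ≤ 3^j * (2*C) := by
        refine ih hd ?_
        intro z hz
        obtain ⟨hz1, hz2⟩ := hz
        have hzy : z ∈ Set.Icc y (y + ((j+1:ℕ):ℝ) * h) := by
          constructor
          · linarith
          · push_cast at hz2 ⊢
            linarith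
        have b1 := hCψ z hzy
        have b2 : ‖iteratedDeriv j ψ (y+t) - iteratedDeriv j ψ y‖ ≤ C :=
          hCψ (y+t) ⟨by linarith, by push_cast; nlinarith [Nat.cast_nonneg (α := ℝ) j]⟩
        calc ‖iteratedDeriv j ψ z - iteratedDeriv j ψ (y+t)‖
            = ‖(iteratedDeriv j ψ z - iteratedDeriv j ψ y)
                - (iteratedDeriv j ψ (y+t) - iteratedDeriv j ψ y)‖ := by
              rw [sub_sub_sub_cancel_right]
          _ ≤ ‖iteratedDeriv j ψ z - iteratedDeriv j ψ y‖
                + ‖iteratedDeriv j ψ (y+t) - iteratedDeriv j ψ y‖ := norm_sub_le _ _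
          _ ≤ 2*C := by linarith
      calc ‖Dq j ψ h (y+t) - c‖
          = ‖(Dq j ψ h (y+t) - iteratedDeriv j ψ (y+t)) + (iteratedDeriv j ψ (y+t) - c)‖ := by
            rw [sub_add_sub_cancel]
        _ ≤ _ + _ := norm_add_le _ _
        _ ≤ 3^j * (2*C) + C := add_le_add h1 h2
    have hI := intervalIntegral.norm_integral_le_of_norm_le_const bound
    rw [Dq_eq_integral hG h y, hgoal_c]
    have : h⁻¹ • (∫ t in (0:ℝ)..h, Dq j ψ h (y+t)) - c
        = h⁻¹ • ∫ t in (0:ℝ)..h, (Dq j ψ h (y+t) - c) := by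
      rw [← e1, smul_sub, smul_smul, inv_mul_cancel₀ hh.ne', one_smul]
    rw [this, norm_smul]
    have : ‖∫ t in (0:ℝ)..h, (Dq j ψ h (y+t) - c)‖ ≤ (3^j * (2*C) + C) * h := by
      simpa [abs_of_pos hh] using hI
    calc ‖h⁻¹‖ * ‖∫ t in (0:ℝ)..h, (Dq j ψ h (y+t) - c)‖
        ≤ h⁻¹ * ((3^j * (2*C) + C) * h) := by
          rw [Real.norm_eq_abs, abs_of_pos (inv_pos.mpr hh)]
          exact mul_le_mul_of_nonneg_left this (by positivity)
      _ = 3^j * (2*C) + C := by field_simp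
      _ ≤ 3^(j+1) * C := by
          have h3j : (1:ℝ) ≤ 3^j := one_le_pow₀ (by norm_num)
          ring_nf
          nlinarith [hC0, h3j]

lemma Dq_tendsto {j : ℕ} {G : ℝ → E} [CompleteSpace E]
    (hG : ContDiff ℝ (⊤:ℕ∞) G) (y : ℝ) :
    Tendsto (fun h => Dq j G h y) (𝓝[>] (0:ℝ)) (𝓝 (iteratedDeriv j G y)) := by
  rw [Metric.tendsto_nhds]
  intro ε hε
  have hcont : Continuous (iteratedDeriv j G) := by
    rw [iteratedDeriv_eq_iterate]
    exact (hG.iterate_deriv j).continuous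
  have hC : (0:ℝ) < ε / (2 * 3^j) := by positivity
  obtain ⟨δ, hδ, hδ'⟩ := Metric.continuousAt_iff.mp hcont.continuousAt _ hC
  have hmem : Set.Ioo (0:ℝ) (δ / (j+1)) ∈ 𝓝[>] (0:ℝ) :=
    Ioo_mem_nhdsGT_of_mem ⟨le_rfl, by positivity⟩
  filter_upwards [hmem] with h hh
  obtain ⟨hh0, hhδ⟩ := hh
  have hb : ‖Dq j G h y - iteratedDeriv j G y‖ ≤ 3^j * (ε / (2 * 3^j)) := by
    refine Dq_sub_iteratedDeriv_le hG hh0 ?_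
    intro z hz
    obtain ⟨hz1, hz2⟩ := hz
    have hdist : dist z y < δ := by
      have hjδ : h * ((j:ℝ)+1) < δ := by
        rw [← lt_div_iff₀ (by positivity : (0:ℝ) < (j:ℝ)+1)]
        push_cast at hhδ
        linarith
      rw [Real.dist_eq, abs_of_nonneg (by linarith)]
      nlinarith [hh0.le, Nat.cast_nonneg (α := ℝ) j]
    rw [← dist_eq_norm]
    exact (hδ' hdist).le
  rw [dist_eq_norm]
  have h3 : (3:ℝ)^j * (ε / (2 * 3^j)) = ε/2 := by field_simp
  calc ‖Dq j G h y - iteratedDeriv j G y‖ ≤ ε/2 := by rw [← h3]; exact hb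
    _ < ε := by linarith
end DqAux

set_option maxHeartbeats 1000000 in
/-- **Analyticity lemma (derivative bounds for the parametrized scheme).**
Let `H` be a real Hilbert space, `X` a subspace, `k > 0` a time step, `N ≥ 1`
a number of time steps, `B` a bilinear form with coercivity bound
`B v v ≥ γ‖v‖²` on `X`, `γ > 0`. Suppose that for each `y ∈ ℝ`, `u y` solves
the backward Euler scheme with data `f y : ℕ → H`; that for each `m ≤ N` the
maps `y ↦ f y m` and `y ↦ u y m` are infinitely differentiable from `ℝ` to
`H`; and that there is `γ_* ≥ 0` such that for all `y`, all `j ≥ 0` and all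
`1 ≤ m ≤ N`, `‖∂_y^j (f y m)‖ ≤ γ_*^j * j! * (1 + max_{1≤i≤N} ‖f y i‖)`.
Then for all `y`, all `j ≥ 0` and all `1 ≤ m ≤ N`,
`‖∂_y^j (u y m)‖ ≤ ((1 − e^{−γkm})/γ) * (1 + max_{1≤i≤N} ‖f y i‖) * γ_*^j * j!`. -/
theorem backwardEuler_derivative_bounds
    {H : Type*} [NormedAddCommGroup H] [InnerProductSpace ℝ H] [CompleteSpace H]
    (X : Submodule ℝ H) (k γ : ℝ) (hk : 0 < k) (hγ : 0 < γ)
    (N : ℕ) (hN : 1 ≤ N)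
    (B : H →ₗ[ℝ] H →ₗ[ℝ] ℝ)
    (hcoer : ∀ v ∈ X, γ * ‖v‖ ^ 2 ≤ B v v)
    (f u : ℝ → ℕ → H)
    (hu0 : ∀ y, u y 0 = 0) (huX : ∀ y m, u y m ∈ X)
    (hscheme : ∀ y, ∀ m, 1 ≤ m → m ≤ N → ∀ v ∈ X,
      ⟪u y m, v⟫ + k * B (u y m) v = k * ⟪f y m, v⟫ + ⟪u y (m - 1), v⟫)
    (hfsmooth : ∀ m ≤ N, ContDiff ℝ (⊤ : ℕ∞) (fun y => f y m))
    (husmooth : ∀ m ≤ N, ContDiff ℝ (⊤ : ℕ∞) (fun y => u y m))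
    (γstar : ℝ) (hγstar : 0 ≤ γstar)
    (hfder : ∀ y : ℝ, ∀ j : ℕ, ∀ m, 1 ≤ m → m ≤ N →
      ‖iteratedDeriv j (fun y' => f y' m) y‖
        ≤ γstar ^ j * (Nat.factorial j : ℝ) *
          (1 + (Finset.Icc 1 N).sup' (Finset.nonempty_Icc.mpr hN)
            (fun i => ‖f y i‖))) :
    ∀ y : ℝ, ∀ j : ℕ, ∀ m, 1 ≤ m → m ≤ N →
      ‖iteratedDeriv j (fun y' => u y' m) y‖
        ≤ ((1 - Real.exp (-(γ * k * m))) / γ) *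
          (1 + (Finset.Icc 1 N).sup' (Finset.nonempty_Icc.mpr hN)
            (fun i => ‖f y i‖)) * γstar ^ j * (Nat.factorial j : ℝ) := by
  -- Step A: difference quotients solve the scheme
  have stepA : ∀ J : ℕ, ∀ h y' : ℝ, ∀ m, 1 ≤ m → m ≤ N → ∀ v ∈ X,
      ⟪Dq J (fun t => u t m) h y', v⟫ + k * B (Dq J (fun t => u t m) h y') v
        = k * ⟪Dq J (fun t => f t m) h y', v⟫ + ⟪Dq J (fun t => u t (m-1)) h y', v⟫ := by
    intro J
    induction J with
    | zero => exact fun h y' m hm1 hm2 v hv => hscheme y' m hm1 hm2 v hv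
    | succ J ih =>
      intro h y' m hm1 hm2 v hv
      have hA := ih h (y' + h) m hm1 hm2 v hv
      have hB := ih h y' m hm1 hm2 v hv
      simp only [Dq, inner_sub_left, real_inner_smul_left, map_sub, map_smul,
        LinearMap.smul_apply, LinearMap.sub_apply, smul_eq_mul]
      linear_combination h⁻¹ * hA - h⁻¹ * hB
  -- Step B: membership
  have stepB : ∀ J : ℕ, ∀ h y' : ℝ, ∀ m : ℕ, Dq J (fun t => u t m) h y' ∈ X := by
    intro J
    induction J with
    | zero => exact fun h y' m => huX y' m
    | succ J ih =>
      intro h y' m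
      exact X.smul_mem _ (X.sub_mem (ih h (y'+h) m) (ih h y' m))
  intro y j
  -- notation
  have hF0 : (0:ℝ) ≤ 1 + (Finset.Icc 1 N).sup' (Finset.nonempty_Icc.mpr hN)
      (fun i => ‖f y i‖) := by
    have h1 : ‖f y 1‖ ≤ (Finset.Icc 1 N).sup' (Finset.nonempty_Icc.mpr hN)
        (fun i => ‖f y i‖) :=
      Finset.le_sup' (fun i => ‖f y i‖) (Finset.mem_Icc.mpr ⟨le_rfl, hN⟩)
    have := norm_nonneg (f y 1)
    linarith
  set F : ℝ := 1 + (Finset.Icc 1 N).sup' (Finset.nonempty_Icc.mpr hN) (fun i => ‖f y i‖)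
    with hFdef
  set Fj : ℝ := γstar ^ j * (Nat.factorial j : ℝ) * F with hFjdef
  have hFj0 : 0 ≤ Fj := by positivity
  set w : ℕ → H := fun m => iteratedDeriv j (fun y' => u y' m) y with hwdef
  set g : ℕ → H := fun m => iteratedDeriv j (fun y' => f y' m) y with hgdef
  -- Step C: per-h energy inequality
  have stepC : ∀ h : ℝ, ∀ m, 1 ≤ m → m ≤ N →
      (1 + k*γ) * ‖Dq j (fun t => u t m) h y‖
        ≤ k * ‖Dq j (fun t => f t m) h y‖ + ‖Dq j (fun t => u t (m-1)) h y‖ := by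
    intro h m hm1 hm2
    set a := Dq j (fun t => u t m) h y with hadef
    set b := Dq j (fun t => f t m) h y with hbdef
    set c := Dq j (fun t => u t (m-1)) h y with hcdef
    have hsq : (1 + k*γ) * ‖a‖^2 ≤ (k * ‖b‖ + ‖c‖) * ‖a‖ := by
      have hEq := stepA j h y m hm1 hm2 a (stepB j h y m)
      have hco := hcoer a (stepB j h y m)
      have h1 : ⟪a, a⟫ = ‖a‖^2 := real_inner_self_eq_norm_sq a
      have h2 : ⟪b, a⟫ ≤ ‖b‖ * ‖a‖ := real_inner_le_norm b a
      have h3 : ⟪c, a⟫ ≤ ‖c‖ * ‖a‖ := real_inner_le_norm c a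
      nlinarith [hk.le]
    rcases eq_or_lt_of_le (norm_nonneg a) with h0 | h0
    · rw [← h0, mul_zero]
      positivity
    · exact (mul_le_mul_iff_of_pos_right h0).mp
        (by nlinarith : ((1 + k*γ) * ‖a‖) * ‖a‖ ≤ (k * ‖b‖ + ‖c‖) * ‖a‖)
  -- Step D: limit of Step C
  have stepD : ∀ m, 1 ≤ m → m ≤ N →
      (1 + k*γ) * ‖w m‖ ≤ k * ‖g m‖ + ‖w (m-1)‖ := by
    intro m hm1 hm2
    have hum : ContDiff ℝ (⊤:ℕ∞) (fun t => u t m) := (husmooth m hm2).of_le (by simp)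
    have hum' : ContDiff ℝ (⊤:ℕ∞) (fun t => u t (m-1)) :=
      (husmooth (m-1) (le_trans (Nat.sub_le m 1) hm2)).of_le (by simp)
    have hfm : ContDiff ℝ (⊤:ℕ∞) (fun t => f t m) := (hfsmooth m hm2).of_le (by simp)
    have T1 : Filter.Tendsto (fun h => (1 + k*γ) * ‖Dq j (fun t => u t m) h y‖)
        (𝓝[>] (0:ℝ)) (𝓝 ((1 + k*γ) * ‖w m‖)) :=
      ((Dq_tendsto hum y).norm).const_mul _
    have T2 : Filter.Tendsto (fun h => k * ‖Dq j (fun t => f t m) h y‖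
          + ‖Dq j (fun t => u t (m-1)) h y‖)
        (𝓝[>] (0:ℝ)) (𝓝 (k * ‖g m‖ + ‖w (m-1)‖)) :=
      (((Dq_tendsto hfm y).norm).const_mul _).add ((Dq_tendsto hum' y).norm)
    exact le_of_tendsto_of_tendsto' T1 T2 (fun h => stepC h m hm1 hm2)
  -- Step E: w 0 = 0
  have stepE : w 0 = 0 := by
    have he : (fun y' => u y' 0) = fun _ : ℝ => (0:H) := funext fun y' => hu0 y'
    rw [hwdef]
    simp only [he]
    rw [iteratedDeriv_eq_iterate]
    have hz : ∀ n : ℕ, deriv^[n] (fun _ : ℝ => (0:H)) = fun _ => 0 := by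
      intro n
      induction n with
      | zero => rfl
      | succ n ihn => rw [Function.iterate_succ_apply', ihn]; funext z; simp
    rw [hz j]
  -- Step F: discrete Gronwall
  set r : ℝ := 1 + k*γ with hrdef
  have hr1 : 1 < r := by rw [hrdef]; nlinarith
  have hr0 : 0 < r := by linarith
  set s : ℝ := r⁻¹ with hsdef
  have hs0 : 0 < s := inv_pos.mpr hr0
  have hrs : r * s = 1 := mul_inv_cancel₀ hr0.ne'
  have stepF : ∀ m, m ≤ N → ‖w m‖ ≤ Fj * (1 - s^m) / γ := by
    intro m
    induction m with
    | zero => intro _; simp [stepE]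
    | succ m ihm =>
      intro hmN
      have hm' : m ≤ N := le_trans (Nat.le_succ m) hmN
      have hD := stepD (m+1) (Nat.le_add_left 1 m) hmN
      have hfb : ‖g (m+1)‖ ≤ Fj := by
        rw [hgdef, hFjdef]
        exact hfder y j (m+1) (Nat.le_add_left 1 m) hmN
      have hw : ‖w m‖ ≤ Fj * (1 - s^m) / γ := ihm hm'
      have hsub : (m+1) - 1 = m := Nat.succ_sub_one m
      rw [hsub] at hD
      have key : k * Fj + Fj * (1 - s^m) / γ = r * (Fj * (1 - s^(m+1)) / γ) := by
        have h1 : r * s^(m+1) = s^m := by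
          rw [pow_succ]
          calc r * (s^m * s) = (r * s) * s^m := by ring
            _ = s^m := by rw [hrs, one_mul]
        have h2 : r * (Fj * (1 - s^(m+1)) / γ) = Fj * (r - s^m) / γ := by
          rw [show r * (Fj * (1 - s^(m+1)) / γ) = Fj * (r - r * s^(m+1)) / γ by ring, h1]
        rw [h2, hrdef]
        field_simp
        ring
      have hmain : r * ‖w (m+1)‖ ≤ r * (Fj * (1 - s^(m+1)) / γ) := by
        calc r * ‖w (m+1)‖ ≤ k * ‖g (m+1)‖ + ‖w m‖ := hD
          _ ≤ k * Fj + Fj * (1 - s^m) / γ := by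
              have := mul_le_mul_of_nonneg_left hfb hk.le
              linarith
          _ = r * (Fj * (1 - s^(m+1)) / γ) := key
      exact le_of_mul_le_mul_left hmain hr0
  -- conclusion
  intro m hm1 hm2
  have hsm : Real.exp (-(γ * k * m)) ≤ s^m := by
    have e1 : Real.exp (-(γ*k*(m:ℕ))) = Real.exp (-(γ*k)) ^ m := by
      rw [← Real.exp_nat_mul]
      congr 1
      push_cast
      ring
    have e2 : Real.exp (-(γ*k)) ≤ s := by
      rw [Real.exp_neg, hsdef]
      have hle : r ≤ Real.exp (γ*k) := by
        have := Real.add_one_le_exp (γ*k)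
        rw [hrdef]; linarith
      exact inv_anti₀ hr0 hle
    rw [e1]
    exact pow_le_pow_left₀ (Real.exp_nonneg _) e2 m
  have hfinal := stepF m hm2
  have h1s : 1 - s^m ≤ 1 - Real.exp (-(γ*k*m)) := by linarith
  calc ‖w m‖ ≤ Fj * (1 - s^m) / γ := hfinal
    _ ≤ Fj * (1 - Real.exp (-(γ*k*m))) / γ := by gcongr
    _ = ((1 - Real.exp (-(γ * k * m))) / γ) * F * γstar ^ j * (Nat.factorial j : ℝ) := by
        rw [hFjdef]; ring
end
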